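/- First-order bi-intuitionistic predicate logic fails the Craig Interpolation Property: the implication φ → ψ, where φ = ∀x∃y(P(y) ∧ (Q(y) → R(x))) ∧ ¬∀x R(x) and ψ = ∀x(P(x) → (Q(x) ∨ S)) → S, is valid on all constant-domain Kripke models, but there is no sentence θ in the common signature {P¹, Q¹} (possibly using the co-implication connective ≪) such that both φ → θ and θ → ψ are valid. -/
import Mathlib

set_option linter.constructorNameAsVariable false

/-- A relational signature (predicate symbols with arities; no function symbols). -/
structure Signature where
  Pred : Type
  arity : Pred → ℕ

/-- Formulas of first-order bi-intuitionistic logic in context `n`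
(de Bruijn style: free variables are `Fin n`). -/
inductive Fml (S : Signature) : ℕ → Type where
  | atom : {n : ℕ} → (P : S.Pred) → (Fin (S.arity P) → Fin n) → Fml S n
  | bot {n} : Fml S n
  | top {n} : Fml S n
  | and {n} : Fml S n → Fml S n → Fml S n
  | or {n} : Fml S n → Fml S n → Fml S n
  | imp {n} : Fml S n → Fml S n → Fml S n
  | coimp {n} : Fml S n → Fml S n → Fml S n
  | all {n} : Fml S (n + 1) → Fml S n
  | ex {n} : Fml S (n + 1) → Fml S n

/-- A constant-domain Kripke model for first-order bi-intuitionistic logic. -/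
structure KModel (S : Signature) where
  W : Type
  R : W → W → Prop
  refl : ∀ w, R w w
  trans : ∀ {u v w}, R u v → R v w → R u w
  D : Type
  dne : Nonempty D
  V : (P : S.Pred) → W → Set (Fin (S.arity P) → D)
  mono : ∀ (P : S.Pred) {w v : W}, R w v → V P w ⊆ V P v

/-- The forcing relation for constant-domain Kripke semantics. -/
def force {S : Signature} (M : KModel S) :
    {n : ℕ} → M.W → (Fin n → M.D) → Fml S n → Prop
  | _, w, ρ, .atom P ts => (fun i => ρ (ts i)) ∈ M.V P w
  | _, _, _, .bot => False
  | _, _, _, .top => True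
  | _, w, ρ, .and φ ψ => force M w ρ φ ∧ force M w ρ ψ
  | _, w, ρ, .or φ ψ => force M w ρ φ ∨ force M w ρ ψ
  | _, w, ρ, .imp φ ψ => ∀ v, M.R w v → force M v ρ φ → force M v ρ ψ
  | _, w, ρ, .coimp φ ψ => ∃ v, M.R v w ∧ force M v ρ φ ∧ ¬ force M v ρ ψ
  | _, w, ρ, .all φ => ∀ a : M.D, force M w (Fin.snoc ρ a) φ
  | _, w, ρ, .ex φ => ∃ a : M.D, force M w (Fin.snoc ρ a) φ

/-- The bi-asimulation conditions: `A` relates `M₀`-pointed-tuples to `M₁`-pointed-tuples,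
`B` the converse direction. -/
structure IsBiAsim (S : Signature) (M₀ M₁ : KModel S)
    (A : ∀ n, M₀.W → (Fin n → M₀.D) → M₁.W → (Fin n → M₁.D) → Prop)
    (B : ∀ n, M₁.W → (Fin n → M₁.D) → M₀.W → (Fin n → M₀.D) → Prop) : Prop where
  atomA : ∀ {n} {w da v db}, A n w da v db → ∀ (P : S.Pred) (ts : Fin (S.arity P) → Fin n),
    (fun i => da (ts i)) ∈ M₀.V P w → (fun i => db (ts i)) ∈ M₁.V P v
  atomB : ∀ {n} {v db w da}, B n v db w da → ∀ (P : S.Pred) (ts : Fin (S.arity P) → Fin n),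
    (fun i => db (ts i)) ∈ M₁.V P v → (fun i => da (ts i)) ∈ M₀.V P w
  backA : ∀ {n} {w da v db}, A n w da v db →
    ∀ v₀, M₁.R v v₀ → ∃ w₀, M₀.R w w₀ ∧ A n w₀ da v₀ db ∧ B n v₀ db w₀ da
  backB : ∀ {n} {v db w da}, B n v db w da →
    ∀ w₀, M₀.R w w₀ → ∃ v₀, M₁.R v v₀ ∧ B n v₀ db w₀ da ∧ A n w₀ da v₀ db
  forthA : ∀ {n} {w da v db}, A n w da v db →
    ∀ w₀, M₀.R w₀ w → ∃ v₀, M₁.R v₀ v ∧ A n w₀ da v₀ db ∧ B n v₀ db w₀ da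
  forthB : ∀ {n} {v db w da}, B n v db w da →
    ∀ v₀, M₁.R v₀ v → ∃ w₀, M₀.R w₀ w ∧ B n v₀ db w₀ da ∧ A n w₀ da v₀ db
  leftA : ∀ {n} {w da v db}, A n w da v db →
    ∀ b : M₁.D, ∃ a : M₀.D, A (n + 1) w (Fin.snoc da a) v (Fin.snoc db b)
  leftB : ∀ {n} {v db w da}, B n v db w da →
    ∀ a : M₀.D, ∃ b : M₁.D, B (n + 1) v (Fin.snoc db b) w (Fin.snoc da a)
  rightA : ∀ {n} {w da v db}, A n w da v db →
    ∀ a : M₀.D, ∃ b : M₁.D, A (n + 1) w (Fin.snoc da a) v (Fin.snoc db b)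
  rightB : ∀ {n} {v db w da}, B n v db w da →
    ∀ b : M₁.D, ∃ a : M₀.D, B (n + 1) v (Fin.snoc db b) w (Fin.snoc da a)

inductive PredAll | P | Q | R | S
abbrev SigAll : Signature := ⟨PredAll, fun x => match x with | .S => 0 | _ => 1⟩


/-- φ in the joint signature {P,Q,R,S}. -/
def phiAll : Fml SigAll 0 :=
  .and
    (.all (.ex (.and (.atom .P ![1]) (.imp (.atom .Q ![1]) (.atom .R ![0])))))
    (.imp (.all (.atom .R ![0])) .bot)

/-- ψ in the joint signature {P,Q,R,S}. -/
def psiAll : Fml SigAll 0 :=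
  .imp
    (.all (.imp (.atom .P ![0]) (.or (.atom .Q ![0]) (.atom .S Fin.elim0))))
    (.atom .S Fin.elim0)


/-- A formula of the joint signature lies in the common signature {P,Q}. -/
def onlyPQ : {n : ℕ} → Fml SigAll n → Prop
  | _, .atom P _ => P = .P ∨ P = .Q
  | _, .bot => True
  | _, .top => True
  | _, .and φ ψ => onlyPQ φ ∧ onlyPQ ψ
  | _, .or φ ψ => onlyPQ φ ∧ onlyPQ ψ
  | _, .imp φ ψ => onlyPQ φ ∧ onlyPQ ψ
  | _, .coimp φ ψ => onlyPQ φ ∧ onlyPQ ψ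
  | _, .all φ => onlyPQ φ
  | _, .ex φ => onlyPQ φ


/-- Validity on all constant-domain Kripke models. -/
def valid {S : Signature} (φ : Fml S 0) : Prop :=
  ∀ (M : KModel S) (w : M.W), force M w Fin.elim0 φ

/-! ### Auxiliary development -/

section Interp

/-- Persistence (monotonicity) of forcing. -/
theorem persist {S : Signature} (M : KModel S) : ∀ {n : ℕ} (φ : Fml S n) {w w' : M.W}
    (ρ : Fin n → M.D), M.R w w' → force M w ρ φ → force M w' ρ φ := by
  intro n φ
  induction φ with
  | atom P ts => intro w w' ρ h hf; exact M.mono P h hf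
  | bot => intro w w' ρ h hf; exact hf
  | top => intro _ _ _ _ _; trivial
  | and φ ψ ihφ ihψ =>
      intro w w' ρ h hf
      exact ⟨ihφ ρ h hf.1, ihψ ρ h hf.2⟩
  | or φ ψ ihφ ihψ =>
      intro w w' ρ h hf
      exact hf.elim (fun x => Or.inl (ihφ ρ h x)) (fun x => Or.inr (ihψ ρ h x))
  | imp φ ψ _ _ =>
      intro w w' ρ h hf v hv hφ
      exact hf v (M.trans h hv) hφ
  | coimp φ ψ _ _ =>
      intro w w' ρ h hf
      obtain ⟨v, hv, h1, h2⟩ := hf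
      exact ⟨v, M.trans hv h, h1, h2⟩
  | all φ ih => intro w w' ρ h hf a; exact ih _ h (hf a)
  | ex φ ih =>
      intro w w' ρ h hf
      obtain ⟨a, ha⟩ := hf
      exact ⟨a, ih _ h ha⟩

/-- Helper: a function out of `Fin 1` is constant. -/
theorem fin1_eq {D : Type} (f g : Fin 1 → D) (h : f 0 = g 0) : f = g := by
  funext i
  have : i = 0 := Subsingleton.elim i 0
  rw [this, h]


theorem fin0_eq {D : Type} (f g : Fin 0 → D) : f = g := funext fun i => i.elim0

theorem validPhiPsi : valid (.imp phiAll psiAll) := by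
  intro M w
  show ∀ v, M.R w v → force M v Fin.elim0 phiAll → force M v Fin.elim0 psiAll
  intro v _ hphi
  have h1 : force M v Fin.elim0
      (.all (.ex (.and (.atom .P ![1]) (.imp (.atom .Q ![1]) (.atom .R ![0]))))) := hphi.1
  have h2 : force M v Fin.elim0 (.imp (.all (.atom (S := SigAll) .R ![0])) .bot) := hphi.2
  show ∀ u, M.R v u →
      force M u Fin.elim0
        (.all (.imp (.atom .P ![0]) (.or (.atom .Q ![0]) (.atom .S Fin.elim0)))) →
      force M u Fin.elim0 (.atom (S := SigAll) .S Fin.elim0)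
  intro u hvu hant
  have hnall' : ¬ ∀ a : M.D,
      (fun i => (Fin.snoc Fin.elim0 a : Fin 1 → M.D) (![0] i)) ∈ M.V .R u :=
    fun hall => h2 u hvu hall
  push_neg at hnall'
  obtain ⟨a, ha⟩ := hnall'
  have h1u := persist M _ Fin.elim0 hvu h1
  obtain ⟨y, hy⟩ := h1u a
  have hyP : (fun i => (Fin.snoc (Fin.snoc Fin.elim0 a : Fin 1 → M.D) y : Fin 2 → M.D)
      (![1] i)) ∈ M.V .P u := hy.1
  have hyQR : ∀ v', M.R u v' →
      (fun i => (Fin.snoc (Fin.snoc Fin.elim0 a : Fin 1 → M.D) y : Fin 2 → M.D) (![1] i))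
        ∈ M.V .Q v' →
      (fun i => (Fin.snoc (Fin.snoc Fin.elim0 a : Fin 1 → M.D) y : Fin 2 → M.D) (![0] i))
        ∈ M.V .R v' := hy.2
  have he1 : (fun i : Fin 1 => (Fin.snoc Fin.elim0 y : Fin 1 → M.D) (![0] i))
      = (fun i : Fin 1 => (Fin.snoc (Fin.snoc Fin.elim0 a : Fin 1 → M.D) y : Fin 2 → M.D)
          (![1] i)) := by
    apply fin1_eq
    simp [Fin.snoc]
  have hor : ((fun i => (Fin.snoc Fin.elim0 y : Fin 1 → M.D) (![0] i)) ∈ M.V .Q u) ∨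
      ((fun i => (Fin.snoc Fin.elim0 y : Fin 1 → M.D) (Fin.elim0 i)) ∈ M.V .S u) :=
    hant y u (M.refl u) (Set.mem_of_eq_of_mem he1 hyP)
  rcases hor with hQ | hS
  · exfalso
    apply ha
    have hQ' : (fun i => (Fin.snoc (Fin.snoc Fin.elim0 a : Fin 1 → M.D) y : Fin 2 → M.D)
        (![1] i)) ∈ M.V .Q u :=
      Set.mem_of_eq_of_mem he1.symm hQ
    have hR := hyQR u (M.refl u) hQ'
    have he2 : (fun i : Fin 1 => (Fin.snoc Fin.elim0 a : Fin 1 → M.D) (![0] i))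
        = (fun i : Fin 1 => (Fin.snoc (Fin.snoc Fin.elim0 a : Fin 1 → M.D) y : Fin 2 → M.D)
            (![0] i)) := by
      apply fin1_eq
      simp [Fin.snoc]
    exact Set.mem_of_eq_of_mem he2 hR
  · exact Set.mem_of_eq_of_mem (fin0_eq _ _) hS

/-! ### The two models -/

/-- Left worlds. -/
structure LW where
  P : Set ℕ
  Q : Set ℕ
  sub : Q ⊆ P
  resInf : {k | k ∉ P}.Infinite
  qInf : Q.Infinite
  evInf : {k | k % 2 = 0 ∧ k ∉ Q}.Infinite

/-- Right worlds. -/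
structure RW where
  P : Set ℕ
  Q : Set ℕ
  sub : Q ⊆ P
  resInf : {k | k ∉ P}.Infinite
  qInf : Q.Infinite

def VL : (P : SigAll.Pred) → LW → Set (Fin (SigAll.arity P) → ℕ)
  | .P, X => {f | f 0 ∈ X.P}
  | .Q, X => {f | f 0 ∈ X.Q}
  | .R, X => {f | 2 * f 0 ∈ X.Q}
  | .S, _ => ∅

/-- `ZS` : the common P=Q extent of the right root. -/
def ZS : Set ℕ := {k | k % 4 = 0 ∨ k % 2 = 1}

def VR : (P : SigAll.Pred) → RW → Set (Fin (SigAll.arity P) → ℕ)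
  | .P, Z => {f | f 0 ∈ Z.P}
  | .Q, Z => {f | f 0 ∈ Z.Q}
  | .R, _ => ∅
  | .S, Z => {f | ∃ k, k ∈ Z.P ∧ k ∉ ZS}

def Mleft : KModel SigAll where
  W := LW
  R X Y := X.P ⊆ Y.P ∧ X.Q ⊆ Y.Q
  refl X := ⟨subset_rfl, subset_rfl⟩
  trans h1 h2 := ⟨h1.1.trans h2.1, h1.2.trans h2.2⟩
  D := ℕ
  dne := ⟨0⟩
  V := VL
  mono := by
    intro P w v h
    cases P
    · exact fun f hf => h.1 hf
    · exact fun f hf => h.2 hf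
    · exact fun f hf => h.2 hf
    · exact fun f hf => hf.elim

def Nright : KModel SigAll where
  W := RW
  R X Y := X.P ⊆ Y.P ∧ X.Q ⊆ Y.Q
  refl X := ⟨subset_rfl, subset_rfl⟩
  trans h1 h2 := ⟨h1.1.trans h2.1, h1.2.trans h2.2⟩
  D := ℕ
  dne := ⟨0⟩
  V := VR
  mono := by
    intro P w v h
    cases P
    · exact fun f hf => h.1 hf
    · exact fun f hf => h.2 hf
    · exact fun f hf => hf.elim
    · rintro f ⟨k, hk1, hk2⟩; exact ⟨k, h.1 hk1, hk2⟩

/-! infinitude facts -/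


theorem evens_inf : ({k : ℕ | k % 2 = 0} : Set ℕ).Infinite :=
  Set.infinite_of_injective_forall_mem (f := fun n : ℕ => 2 * n)
    (fun a b h => by have h' : 2 * a = 2 * b := h; omega)
    (fun n => show 2 * n % 2 = 0 by omega)

theorem odds_inf : ({k : ℕ | k ∉ ({k : ℕ | k % 2 = 0} : Set ℕ)} : Set ℕ).Infinite :=
  Set.infinite_of_injective_forall_mem (f := fun n : ℕ => 2 * n + 1)
    (fun a b h => by have h' : 2 * a + 1 = 2 * b + 1 := h; omega)
    (fun n => show ¬ (2 * n + 1) % 2 = 0 by omega)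

theorem quad_inf : ({k : ℕ | k % 4 = 0} : Set ℕ).Infinite :=
  Set.infinite_of_injective_forall_mem (f := fun n : ℕ => 4 * n)
    (fun a b h => by have h' : 4 * a = 4 * b := h; omega)
    (fun n => show 4 * n % 4 = 0 by omega)

theorem mod42_inf :
    ({k : ℕ | k % 2 = 0 ∧ k ∉ ({k : ℕ | k % 4 = 0} : Set ℕ)} : Set ℕ).Infinite :=
  Set.infinite_of_injective_forall_mem (f := fun n : ℕ => 4 * n + 2)
    (fun a b h => by have h' : 4 * a + 2 = 4 * b + 2 := h; omega)
    (fun n => show (4 * n + 2) % 2 = 0 ∧ ¬ (4 * n + 2) % 4 = 0 by omega)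

theorem zs_inf : ZS.Infinite :=
  quad_inf.mono (fun k hk => Or.inl hk)

theorem zs_res_inf : ({k : ℕ | k ∉ ZS} : Set ℕ).Infinite :=
  Set.infinite_of_injective_forall_mem (f := fun n : ℕ => 4 * n + 2)
    (fun a b h => by have h' : 4 * a + 2 = 4 * b + 2 := h; omega)
    (fun n => show ¬ ((4 * n + 2) % 4 = 0 ∨ (4 * n + 2) % 2 = 1) by omega)

/-- The left root. -/
def vL : LW where
  P := {k | k % 2 = 0}
  Q := {k | k % 4 = 0}
  sub := fun k hk => by
    have h : k % 4 = 0 := hk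
    show k % 2 = 0
    omega
  resInf := odds_inf
  qInf := quad_inf
  evInf := mod42_inf

/-- The right root. -/
def wR : RW where
  P := ZS
  Q := ZS
  sub := subset_rfl
  resInf := zs_res_inf
  qInf := zs_inf

theorem forceVphi : force Mleft vL Fin.elim0 phiAll := by
  constructor
  · show ∀ a : ℕ, ∃ y : ℕ,
        ((Fin.snoc (Fin.snoc Fin.elim0 a : Fin 1 → ℕ) y : Fin 2 → ℕ) (![1] 0) ∈ vL.P) ∧
        ∀ X' : LW, Mleft.R vL X' →
          (Fin.snoc (Fin.snoc Fin.elim0 a : Fin 1 → ℕ) y : Fin 2 → ℕ) (![1] 0) ∈ X'.Q →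
          2 * (Fin.snoc (Fin.snoc Fin.elim0 a : Fin 1 → ℕ) y : Fin 2 → ℕ) (![0] 0) ∈ X'.Q
    intro a
    have e1 : (Fin.snoc (Fin.snoc Fin.elim0 a : Fin 1 → ℕ) (2 * a) : Fin 2 → ℕ) (![1] 0)
        = 2 * a := by simp [Fin.snoc]
    have e0 : (Fin.snoc (Fin.snoc Fin.elim0 a : Fin 1 → ℕ) (2 * a) : Fin 2 → ℕ) (![0] 0)
        = a := by simp [Fin.snoc]
    refine ⟨2 * a, ?_, ?_⟩
    · rw [e1]
      show 2 * a % 2 = 0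
      omega
    · intro X' _ hQ
      rw [e1] at hQ
      rw [e0]
      exact hQ
  · show ∀ X' : LW, Mleft.R vL X' →
        (∀ a : ℕ, 2 * (Fin.snoc Fin.elim0 a : Fin 1 → ℕ) (![0] 0) ∈ X'.Q) → False
    intro X' _ hall
    obtain ⟨k, hk, hknot⟩ := (X'.evInf).nonempty
    obtain ⟨m, hm⟩ : ∃ m, k = 2 * m := ⟨k / 2, by omega⟩
    have h2 := hall m
    have e : (Fin.snoc Fin.elim0 m : Fin 1 → ℕ) (![0] 0) = m := by simp [Fin.snoc]
    rw [e] at h2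
    rw [← hm] at h2
    exact hknot h2

theorem antWR : ∀ (Z' : RW), Nright.R wR Z' →
    ∀ d : ℕ, d ∈ Z'.P → d ∈ Z'.Q ∨ (∃ k, k ∈ Z'.P ∧ k ∉ ZS) := by
  intro Z' hZ' d hd
  by_cases hS : ∃ k, k ∈ Z'.P ∧ k ∉ ZS
  · exact Or.inr hS
  · push_neg at hS
    have : d ∈ ZS := hS d hd
    exact Or.inl (hZ'.2 this)

theorem nforceWpsi : ¬ force Nright wR Fin.elim0 psiAll := by
  intro h
  have hant : ∀ d : ℕ, ∀ Z' : RW, Nright.R wR Z' →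
      (Fin.snoc Fin.elim0 d : Fin 1 → ℕ) (![0] 0) ∈ Z'.P →
      (Fin.snoc Fin.elim0 d : Fin 1 → ℕ) (![0] 0) ∈ Z'.Q ∨ (∃ k, k ∈ Z'.P ∧ k ∉ ZS) := by
    intro d Z' hZ' hP
    exact antWR Z' hZ' _ hP
  have hS : ∃ k, k ∈ wR.P ∧ k ∉ ZS := h wR (Nright.refl wR) hant
  obtain ⟨k, hk1, hk2⟩ := hS
  exact hk2 hk1

/-! ### The asimulation relations -/

def pairA (X : LW) (a : ℕ) (Z : RW) (b : ℕ) : Prop :=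
  (a ∈ X.Q → b ∈ Z.Q) ∧ (a ∈ X.P → b ∈ Z.P)

def pairB (Z : RW) (b : ℕ) (X : LW) (a : ℕ) : Prop :=
  (b ∈ Z.Q → a ∈ X.Q) ∧ (b ∈ Z.P → a ∈ X.P)

def BIJ {n : ℕ} (da db : Fin n → ℕ) : Prop := ∀ i j, da i = da j ↔ db i = db j

def Arel {n : ℕ} (X : LW) (da : Fin n → ℕ) (Z : RW) (db : Fin n → ℕ) : Prop :=
  (∀ i, pairA X (da i) Z (db i)) ∧ BIJ da db

def Brel {n : ℕ} (Z : RW) (db : Fin n → ℕ) (X : LW) (da : Fin n → ℕ) : Prop :=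
  (∀ i, pairB Z (db i) X (da i)) ∧ BIJ da db

/-! ### Finiteness helpers -/

theorem finite_da {n : ℕ} (da : Fin n → ℕ) (p : Fin n → Prop) :
    ({x | ∃ i, da i = x ∧ p i} : Set ℕ).Finite := by
  apply Set.Finite.subset (Set.finite_range da)
  rintro x ⟨i, rfl, _⟩
  exact ⟨i, rfl⟩

/-! ### World-move lemmas -/

theorem clause_backA {n : ℕ} {X : LW} {da : Fin n → ℕ} {Z : RW} {db : Fin n → ℕ}
    (h : Arel X da Z db) {Z' : RW} (hZ : Z.P ⊆ Z'.P ∧ Z.Q ⊆ Z'.Q) :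
    ∃ X₀ : LW, (X.P ⊆ X₀.P ∧ X.Q ⊆ X₀.Q) ∧ Arel X₀ da Z' db ∧ Brel Z' db X₀ da := by
  obtain ⟨hp, hbij⟩ := h
  refine ⟨⟨X.P ∪ {x | ∃ i, da i = x ∧ db i ∈ Z'.P},
          X.Q ∪ {x | ∃ i, da i = x ∧ db i ∈ Z'.Q}, ?_, ?_, ?_, ?_⟩,
          ⟨Set.subset_union_left, Set.subset_union_left⟩, ?_, ?_⟩
  · rintro x (hx | ⟨i, rfl, hi⟩)
    · exact Or.inl (X.sub hx)
    · exact Or.inr ⟨i, rfl, Z'.sub hi⟩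
  · have he : {k | k ∉ X.P ∪ {x | ∃ i, da i = x ∧ db i ∈ Z'.P}}
        = {k | k ∉ X.P} \ {x | ∃ i, da i = x ∧ db i ∈ Z'.P} := by
      ext k; simp [Set.mem_setOf_eq, Set.mem_diff, not_or]
    rw [he]
    exact X.resInf.diff (finite_da da _)
  · exact X.qInf.mono Set.subset_union_left
  · have he : {k | k % 2 = 0 ∧ k ∉ X.Q ∪ {x | ∃ i, da i = x ∧ db i ∈ Z'.Q}}
        = {k | k % 2 = 0 ∧ k ∉ X.Q} \ {x | ∃ i, da i = x ∧ db i ∈ Z'.Q} := by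
      ext k; simp [Set.mem_setOf_eq, Set.mem_diff, not_or]; tauto
    rw [he]
    exact X.evInf.diff (finite_da da _)
  · refine ⟨fun i => ⟨?_, ?_⟩, hbij⟩
    · rintro (hx | ⟨j, hj, hjQ⟩)
      · exact hZ.2 ((hp i).1 hx)
      · rwa [(hbij j i).mp hj] at hjQ
    · rintro (hx | ⟨j, hj, hjP⟩)
      · exact hZ.1 ((hp i).2 hx)
      · rwa [(hbij j i).mp hj] at hjP
  · refine ⟨fun i => ⟨?_, ?_⟩, hbij⟩
    · intro hb; exact Or.inr ⟨i, rfl, hb⟩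
    · intro hb; exact Or.inr ⟨i, rfl, hb⟩

theorem clause_backB {n : ℕ} {X : LW} {da : Fin n → ℕ} {Z : RW} {db : Fin n → ℕ}
    (h : Brel Z db X da) {X₀ : LW} (hX : X.P ⊆ X₀.P ∧ X.Q ⊆ X₀.Q) :
    ∃ Z₀ : RW, (Z.P ⊆ Z₀.P ∧ Z.Q ⊆ Z₀.Q) ∧ Brel Z₀ db X₀ da ∧ Arel X₀ da Z₀ db := by
  obtain ⟨hp, hbij⟩ := h
  refine ⟨⟨Z.P ∪ {y | ∃ i, db i = y ∧ da i ∈ X₀.P},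
          Z.Q ∪ {y | ∃ i, db i = y ∧ da i ∈ X₀.Q}, ?_, ?_, ?_⟩,
          ⟨Set.subset_union_left, Set.subset_union_left⟩, ?_, ?_⟩
  · rintro y (hy | ⟨i, rfl, hi⟩)
    · exact Or.inl (Z.sub hy)
    · exact Or.inr ⟨i, rfl, X₀.sub hi⟩
  · have he : {k | k ∉ Z.P ∪ {y | ∃ i, db i = y ∧ da i ∈ X₀.P}}
        = {k | k ∉ Z.P} \ {y | ∃ i, db i = y ∧ da i ∈ X₀.P} := by
      ext k; simp [Set.mem_setOf_eq, Set.mem_diff, not_or]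
    rw [he]
    exact Z.resInf.diff (finite_da db _)
  · exact Z.qInf.mono Set.subset_union_left
  · refine ⟨fun i => ⟨?_, ?_⟩, hbij⟩
    · rintro (hy | ⟨j, hj, hjQ⟩)
      · exact hX.2 ((hp i).1 hy)
      · rwa [(hbij j i).mpr hj] at hjQ
    · rintro (hy | ⟨j, hj, hjP⟩)
      · exact hX.1 ((hp i).2 hy)
      · rwa [(hbij j i).mpr hj] at hjP
  · refine ⟨fun i => ⟨?_, ?_⟩, hbij⟩
    · intro ha; exact Or.inr ⟨i, rfl, ha⟩
    · intro ha; exact Or.inr ⟨i, rfl, ha⟩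

theorem clause_forthA {n : ℕ} {X : LW} {da : Fin n → ℕ} {Z : RW} {db : Fin n → ℕ}
    (h : Arel X da Z db) {X₀ : LW} (hX : X₀.P ⊆ X.P ∧ X₀.Q ⊆ X.Q) :
    ∃ Z₀ : RW, (Z₀.P ⊆ Z.P ∧ Z₀.Q ⊆ Z.Q) ∧ Arel X₀ da Z₀ db ∧ Brel Z₀ db X₀ da := by
  obtain ⟨hp, hbij⟩ := h
  refine ⟨⟨Z.P \ {y | ∃ i, db i = y ∧ da i ∉ X₀.P},
          Z.Q \ {y | ∃ i, db i = y ∧ da i ∉ X₀.Q}, ?_, ?_, ?_⟩,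
          ⟨Set.diff_subset, Set.diff_subset⟩, ?_, ?_⟩
  · rintro y ⟨hy1, hy2⟩
    refine ⟨Z.sub hy1, ?_⟩
    rintro ⟨i, rfl, hi⟩
    exact hy2 ⟨i, rfl, fun hq => hi (X₀.sub hq)⟩
  · apply Set.Infinite.mono _ Z.resInf
    intro k hk
    simp only [Set.mem_setOf_eq] at *
    intro hc
    exact hk hc.1
  · exact Z.qInf.diff (finite_da db _)
  · refine ⟨fun i => ⟨?_, ?_⟩, hbij⟩
    · intro hq
      refine ⟨(hp i).1 (hX.2 hq), ?_⟩
      rintro ⟨j, hj, hjq⟩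
      exact hjq (by rwa [(hbij j i).mpr hj])
    · intro hq
      refine ⟨(hp i).2 (hX.1 hq), ?_⟩
      rintro ⟨j, hj, hjq⟩
      exact hjq (by rwa [(hbij j i).mpr hj])
  · refine ⟨fun i => ⟨?_, ?_⟩, hbij⟩
    · rintro ⟨h1, h2⟩
      by_contra hc
      exact h2 ⟨i, rfl, hc⟩
    · rintro ⟨h1, h2⟩
      by_contra hc
      exact h2 ⟨i, rfl, hc⟩

theorem clause_forthB {n : ℕ} {X : LW} {da : Fin n → ℕ} {Z : RW} {db : Fin n → ℕ}
    (h : Brel Z db X da) {Z₀ : RW} (hZ : Z₀.P ⊆ Z.P ∧ Z₀.Q ⊆ Z.Q) :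
    ∃ X₀ : LW, (X₀.P ⊆ X.P ∧ X₀.Q ⊆ X.Q) ∧ Brel Z₀ db X₀ da ∧ Arel X₀ da Z₀ db := by
  obtain ⟨hp, hbij⟩ := h
  refine ⟨⟨X.P \ {x | ∃ i, da i = x ∧ db i ∉ Z₀.P},
          X.Q \ {x | ∃ i, da i = x ∧ db i ∉ Z₀.Q}, ?_, ?_, ?_, ?_⟩,
          ⟨Set.diff_subset, Set.diff_subset⟩, ?_, ?_⟩
  · rintro x ⟨hx1, hx2⟩
    refine ⟨X.sub hx1, ?_⟩
    rintro ⟨i, rfl, hi⟩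
    exact hx2 ⟨i, rfl, fun hq => hi (Z₀.sub hq)⟩
  · apply Set.Infinite.mono _ X.resInf
    intro k hk
    simp only [Set.mem_setOf_eq] at *
    intro hc
    exact hk hc.1
  · exact X.qInf.diff (finite_da da _)
  · apply Set.Infinite.mono _ X.evInf
    intro k hk
    simp only [Set.mem_setOf_eq] at *
    exact ⟨hk.1, fun hc => hk.2 hc.1⟩
  · refine ⟨fun i => ⟨?_, ?_⟩, hbij⟩
    · intro hq
      refine ⟨(hp i).1 (hZ.2 hq), ?_⟩
      rintro ⟨j, hj, hjq⟩
      exact hjq (by rwa [(hbij j i).mp hj])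
    · intro hq
      refine ⟨(hp i).2 (hZ.1 hq), ?_⟩
      rintro ⟨j, hj, hjq⟩
      exact hjq (by rwa [(hbij j i).mp hj])
  · refine ⟨fun i => ⟨?_, ?_⟩, hbij⟩
    · rintro ⟨h1, h2⟩
      by_contra hc
      exact h2 ⟨i, rfl, hc⟩
    · rintro ⟨h1, h2⟩
      by_contra hc
      exact h2 ⟨i, rfl, hc⟩

/-! ### Tuple-extension lemmas -/

theorem bij_snoc {n : ℕ} {da db : Fin n → ℕ} (hbij : BIJ da db) {a b : ℕ}
    (hab : ∀ i, da i = a ↔ db i = b) :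
    BIJ (Fin.snoc da a) (Fin.snoc db b) := by
  intro i j
  refine Fin.lastCases ?_ ?_ i
  · refine Fin.lastCases ?_ ?_ j
    · simp
    · intro k
      simp only [Fin.snoc_last, Fin.snoc_castSucc]
      rw [eq_comm (a := a), eq_comm (a := b)]
      exact hab k
  · intro k
    refine Fin.lastCases ?_ ?_ j
    · simp only [Fin.snoc_last, Fin.snoc_castSucc]
      exact hab k
    · intro l
      simp only [Fin.snoc_castSucc]
      exact hbij k l

theorem Arel.snoc {n : ℕ} {X : LW} {da : Fin n → ℕ} {Z : RW} {db : Fin n → ℕ}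
    (h : Arel X da Z db) {a b : ℕ} (hpair : pairA X a Z b)
    (hab : ∀ i, da i = a ↔ db i = b) :
    Arel X (Fin.snoc da a) Z (Fin.snoc db b) := by
  refine ⟨?_, bij_snoc h.2 hab⟩
  intro i
  refine Fin.lastCases ?_ ?_ i
  · simpa using hpair
  · intro k; simpa using h.1 k

theorem Brel.snoc {n : ℕ} {X : LW} {da : Fin n → ℕ} {Z : RW} {db : Fin n → ℕ}
    (h : Brel Z db X da) {a b : ℕ} (hpair : pairB Z b X a)
    (hab : ∀ i, da i = a ↔ db i = b) :
    Brel Z (Fin.snoc db b) X (Fin.snoc da a) := by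
  refine ⟨?_, bij_snoc h.2 hab⟩
  intro i
  refine Fin.lastCases ?_ ?_ i
  · simpa using hpair
  · intro k; simpa using h.1 k

/-! ### Element-move lemmas -/

theorem clause_leftA {n : ℕ} {X : LW} {da : Fin n → ℕ} {Z : RW} {db : Fin n → ℕ}
    (h : Arel X da Z db) (b : ℕ) :
    ∃ a, Arel X (Fin.snoc da a) Z (Fin.snoc db b) := by
  by_cases hmem : ∃ j, db j = b
  · obtain ⟨j, hj⟩ := hmem
    refine ⟨da j, h.snoc ?_ ?_⟩
    · have := h.1 j
      rwa [hj] at this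
    · intro i
      rw [← hj]
      exact h.2 i j
  · obtain ⟨a, ha⟩ := (X.resInf.diff (Set.finite_range da)).nonempty
    obtain ⟨haP, har⟩ := ha
    refine ⟨a, h.snoc ?_ ?_⟩
    · exact ⟨fun hq => absurd (X.sub hq) haP, fun hp => absurd hp haP⟩
    · intro i
      constructor
      · intro hc; exact absurd ⟨i, hc⟩ har
      · intro hc; exact absurd ⟨i, hc⟩ hmem

theorem clause_rightA {n : ℕ} {X : LW} {da : Fin n → ℕ} {Z : RW} {db : Fin n → ℕ}
    (h : Arel X da Z db) (a : ℕ) :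
    ∃ b, Arel X (Fin.snoc da a) Z (Fin.snoc db b) := by
  by_cases hmem : ∃ j, da j = a
  · obtain ⟨j, hj⟩ := hmem
    refine ⟨db j, h.snoc ?_ ?_⟩
    · have := h.1 j
      rwa [hj] at this
    · intro i
      rw [← hj]
      exact h.2 i j
  · by_cases haP : a ∈ X.P
    · obtain ⟨b, hb⟩ := (Z.qInf.diff (Set.finite_range db)).nonempty
      obtain ⟨hbQ, hbr⟩ := hb
      refine ⟨b, h.snoc ⟨fun _ => hbQ, fun _ => Z.sub hbQ⟩ ?_⟩
      intro i
      constructor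
      · intro hc; exact absurd ⟨i, hc⟩ hmem
      · intro hc; exact absurd ⟨i, hc⟩ hbr
    · obtain ⟨b, hb⟩ := (Z.resInf.diff (Set.finite_range db)).nonempty
      obtain ⟨hbP, hbr⟩ := hb
      refine ⟨b, h.snoc ⟨fun hq => absurd (X.sub hq) haP, fun hp => absurd hp haP⟩ ?_⟩
      intro i
      constructor
      · intro hc; exact absurd ⟨i, hc⟩ hmem
      · intro hc; exact absurd ⟨i, hc⟩ hbr

theorem clause_leftB {n : ℕ} {X : LW} {da : Fin n → ℕ} {Z : RW} {db : Fin n → ℕ}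
    (h : Brel Z db X da) (a : ℕ) :
    ∃ b, Brel Z (Fin.snoc db b) X (Fin.snoc da a) := by
  by_cases hmem : ∃ j, da j = a
  · obtain ⟨j, hj⟩ := hmem
    refine ⟨db j, h.snoc ?_ ?_⟩
    · have := h.1 j
      rwa [hj] at this
    · intro i
      rw [← hj]
      exact h.2 i j
  · obtain ⟨b, hb⟩ := (Z.resInf.diff (Set.finite_range db)).nonempty
    obtain ⟨hbP, hbr⟩ := hb
    refine ⟨b, h.snoc ⟨fun hq => absurd (Z.sub hq) hbP, fun hp => absurd hp hbP⟩ ?_⟩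
    intro i
    constructor
    · intro hc; exact absurd ⟨i, hc⟩ hmem
    · intro hc; exact absurd ⟨i, hc⟩ hbr

theorem clause_rightB {n : ℕ} {X : LW} {da : Fin n → ℕ} {Z : RW} {db : Fin n → ℕ}
    (h : Brel Z db X da) (b : ℕ) :
    ∃ a, Brel Z (Fin.snoc db b) X (Fin.snoc da a) := by
  by_cases hmem : ∃ j, db j = b
  · obtain ⟨j, hj⟩ := hmem
    refine ⟨da j, h.snoc ?_ ?_⟩
    · have := h.1 j
      rwa [hj] at this
    · intro i
      rw [← hj]
      exact h.2 i j
  · by_cases hbP : b ∈ Z.P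
    · obtain ⟨a, ha⟩ := (X.qInf.diff (Set.finite_range da)).nonempty
      obtain ⟨haQ, har⟩ := ha
      refine ⟨a, h.snoc ⟨fun _ => haQ, fun _ => X.sub haQ⟩ ?_⟩
      intro i
      constructor
      · intro hc; exact absurd ⟨i, hc⟩ har
      · intro hc; exact absurd ⟨i, hc⟩ hmem
    · obtain ⟨a, ha⟩ := (X.resInf.diff (Set.finite_range da)).nonempty
      obtain ⟨haP, har⟩ := ha
      refine ⟨a, h.snoc ⟨fun hq => absurd (Z.sub hq) hbP, fun hp => absurd hp hbP⟩ ?_⟩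
      intro i
      constructor
      · intro hc; exact absurd ⟨i, hc⟩ har
      · intro hc; exact absurd ⟨i, hc⟩ hmem

/-! ### Preservation of {P,Q}-formulas along the asimulation -/

theorem preserve : ∀ {n : ℕ} (θ : Fml SigAll n), onlyPQ θ →
    ∀ (X : LW) (da : Fin n → ℕ) (Z : RW) (db : Fin n → ℕ),
      (Arel X da Z db → force Mleft X da θ → force Nright Z db θ) ∧
      (Brel Z db X da → force Nright Z db θ → force Mleft X da θ) := by
  intro n θ
  induction θ with
  | atom P ts =>
    intro hPQ X da Z db
    rcases hPQ with hp | hp <;> subst hp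
    · constructor
      · intro hA hf
        have h0 : da (ts 0) ∈ X.P := hf
        exact ((hA.1 (ts 0)).2 h0 : db (ts 0) ∈ Z.P)
      · intro hB hf
        have h0 : db (ts 0) ∈ Z.P := hf
        exact ((hB.1 (ts 0)).2 h0 : da (ts 0) ∈ X.P)
    · constructor
      · intro hA hf
        have h0 : da (ts 0) ∈ X.Q := hf
        exact ((hA.1 (ts 0)).1 h0 : db (ts 0) ∈ Z.Q)
      · intro hB hf
        have h0 : db (ts 0) ∈ Z.Q := hf
        exact ((hB.1 (ts 0)).1 h0 : da (ts 0) ∈ X.Q)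
  | bot =>
    intro _ X da Z db
    exact ⟨fun _ hf => hf.elim, fun _ hf => hf.elim⟩
  | top =>
    intro _ X da Z db
    exact ⟨fun _ _ => trivial, fun _ _ => trivial⟩
  | and φ ψ ihφ ihψ =>
    intro hPQ X da Z db
    obtain ⟨h1, h2⟩ := hPQ
    constructor
    · intro hA hf
      exact ⟨(ihφ h1 X da Z db).1 hA hf.1, (ihψ h2 X da Z db).1 hA hf.2⟩
    · intro hB hf
      exact ⟨(ihφ h1 X da Z db).2 hB hf.1, (ihψ h2 X da Z db).2 hB hf.2⟩
  | or φ ψ ihφ ihψ =>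
    intro hPQ X da Z db
    obtain ⟨h1, h2⟩ := hPQ
    constructor
    · intro hA hf
      exact hf.elim (fun x => Or.inl ((ihφ h1 X da Z db).1 hA x))
        (fun x => Or.inr ((ihψ h2 X da Z db).1 hA x))
    · intro hB hf
      exact hf.elim (fun x => Or.inl ((ihφ h1 X da Z db).2 hB x))
        (fun x => Or.inr ((ihψ h2 X da Z db).2 hB x))
  | imp φ ψ ihφ ihψ =>
    intro hPQ X da Z db
    obtain ⟨h1, h2⟩ := hPQ
    constructor
    · intro hA hf Z' hZZ' hφ'
      obtain ⟨X₀, hX₀, hA', hB'⟩ := clause_backA hA hZZ'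
      have hφX : force Mleft X₀ da φ := (ihφ h1 X₀ da Z' db).2 hB' hφ'
      exact (ihψ h2 X₀ da Z' db).1 hA' (hf X₀ hX₀ hφX)
    · intro hB hf X₀ hXX₀ hφ'
      obtain ⟨Z₀, hZ₀, hB', hA'⟩ := clause_backB hB hXX₀
      have hφZ : force Nright Z₀ db φ := (ihφ h1 X₀ da Z₀ db).1 hA' hφ'
      exact (ihψ h2 X₀ da Z₀ db).2 hB' (hf Z₀ hZ₀ hφZ)
  | coimp φ ψ ihφ ihψ =>
    intro hPQ X da Z db
    obtain ⟨h1, h2⟩ := hPQ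
    constructor
    · intro hA hf
      obtain ⟨X₀, hX₀, hφ₀, hψ₀⟩ := hf
      obtain ⟨Z₀, hZ₀, hA', hB'⟩ := clause_forthA hA hX₀
      refine ⟨Z₀, hZ₀, (ihφ h1 X₀ da Z₀ db).1 hA' hφ₀, ?_⟩
      intro hc
      exact hψ₀ ((ihψ h2 X₀ da Z₀ db).2 hB' hc)
    · intro hB hf
      obtain ⟨Z₀, hZ₀, hφ₀, hψ₀⟩ := hf
      obtain ⟨X₀, hX₀, hB', hA'⟩ := clause_forthB hB hZ₀
      refine ⟨X₀, hX₀, (ihφ h1 X₀ da Z₀ db).2 hB' hφ₀, ?_⟩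
      intro hc
      exact hψ₀ ((ihψ h2 X₀ da Z₀ db).1 hA' hc)
  | all φ ih =>
    intro hPQ X da Z db
    constructor
    · intro hA hf b
      obtain ⟨a, hA'⟩ := clause_leftA hA b
      exact (ih hPQ X _ Z _).1 hA' (hf a)
    · intro hB hf a
      obtain ⟨b, hB'⟩ := clause_leftB hB a
      exact (ih hPQ X _ Z _).2 hB' (hf b)
  | ex φ ih =>
    intro hPQ X da Z db
    constructor
    · intro hA hf
      obtain ⟨a, ha⟩ := hf
      obtain ⟨b, hA'⟩ := clause_rightA hA a
      exact ⟨b, (ih hPQ X _ Z _).1 hA' ha⟩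
    · intro hB hf
      obtain ⟨b, hb⟩ := hf
      obtain ⟨a, hB'⟩ := clause_rightB hB b
      exact ⟨a, (ih hPQ X _ Z _).2 hB' hb⟩

end Interp
/-- failure of Craig interpolation for first-order bi-intuitionistic logic:
φ → ψ is valid, but no sentence θ of the common signature {P,Q} interpolates. -/
theorem stmt19 :
    valid (.imp phiAll psiAll) ∧
    ¬ ∃ θ : Fml SigAll 0, onlyPQ θ ∧ valid (.imp phiAll θ) ∧ valid (.imp θ psiAll) := by
  refine ⟨validPhiPsi, ?_⟩
  rintro ⟨θ, hPQ, h1, h2⟩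
  have hθv : force Mleft vL Fin.elim0 θ := h1 Mleft vL vL (Mleft.refl vL) forceVphi
  have hA0 : Arel vL (Fin.elim0 : Fin 0 → ℕ) wR (Fin.elim0 : Fin 0 → ℕ) :=
    ⟨fun i => i.elim0, fun i => i.elim0⟩
  have hθw : force Nright wR Fin.elim0 θ :=
    (preserve θ hPQ vL Fin.elim0 wR Fin.elim0).1 hA0 hθv
  exact nforceWpsi (h2 Nright wR wR (Nright.refl wR) hθw)
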